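/- The graph $K_5 - e$ (the complete graph on 5 vertices minus one edge) satisfies $rx_3(K_5 - e) = 3$. -/

import Mathlib

open SimpleGraph

/-- An edge-coloring `c` is a `k`-rainbow coloring of `G` if every `k`-set of vertices
is contained in a rainbow tree: a subgraph of `G` that is a tree, contains the `k` vertices,
and whose edges receive pairwise distinct colors. -/
def IsRainbowColoring {V : Type*} [Fintype V] (G : SimpleGraph V) {α : Type*}
    (c : Sym2 V → α) (k : ℕ) : Prop :=
  ∀ S : Finset V, S.card = k →
    ∃ T : G.Subgraph, (↑S : Set V) ⊆ T.verts ∧ T.coe.IsTree ∧ Set.InjOn c T.edgeSet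

/-- The `k`-rainbow index of `G`: the minimum number of colors in a `k`-rainbow coloring. -/
noncomputable def rxk {V : Type*} [Fintype V] (G : SimpleGraph V) (k : ℕ) : ℕ :=
  sInf {q | ∃ c : Sym2 V → Fin q, IsRainbowColoring G c k}

/-- `K₅ - e`: the complete graph on 5 vertices minus one edge. -/
def K5MinusE : SimpleGraph (Fin 5) :=
  (completeGraph (Fin 5)).deleteEdges {s(0, 1)}

/-!
Colouring `s(i, j)` by `i + j mod 3` joins every triple of vertices by a rainbow path with two
edges, so `rx₃ ≤ 3`. With two colours, a rainbow tree through a triple has at most two edges and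
so no vertex outside the triple; hence the edges inside a triple are never monochromatic, and as
`s(0, 1)` is missing, `s(0, x)` and `s(1, x)` get different colours. Two of the edges from `0` to
`2, 3, 4`, say to `x` and `y`, share a colour `a`; then `s(1, x)` and `s(1, y)` both have the other
colour `b`, and `s(x, y)` can be neither `a` nor `b`.
-/

theorem Sym2.eq_or_eq_or_eq_of_forall_mem {V : Type*} [DecidableEq V] {e : Sym2 V} {x y z : V}
    (he : ¬e.IsDiag) (hv : ∀ v ∈ e, v ∈ ({x, y, z} : Finset V)) :
    e = s(x, y) ∨ e = s(x, z) ∨ e = s(y, z) := by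
  induction e using Sym2.ind with
  | _ u w =>
    have hu := hv u (Sym2.mem_mk_left u w)
    have hw := hv w (Sym2.mem_mk_right u w)
    simp only [Finset.mem_insert, Finset.mem_singleton] at hu hw
    simp only [Sym2.mk_isDiag_iff] at he
    rcases hu with rfl | rfl | rfl <;> rcases hw with rfl | rfl | rfl <;> simp_all [Sym2.eq_swap]

namespace SimpleGraph

variable {V : Type*} {G : SimpleGraph V}

theorem Subgraph.nat_card_edgeSet_coe (T : G.Subgraph) :
    Nat.card T.coe.edgeSet = T.edgeSet.ncard := by
  rw [← T.image_coe_edgeSet_coe, Set.ncard_image_of_injective _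
    (Sym2.map.injective Subtype.val_injective), Nat.card_coe_set_eq]

theorem Subgraph.ncard_edgeSet_add_one_of_isTree [Finite V] {T : G.Subgraph} (hT : T.coe.IsTree) :
    T.edgeSet.ncard + 1 = T.verts.ncard := by
  rw [← T.nat_card_edgeSet_coe, ← Nat.card_coe_set_eq]
  exact (isTree_iff_connected_and_card.mp hT).2

theorem verts_sup_subgraphOfAdj {a b d : V} (hab : G.Adj a b) (hbd : G.Adj b d) :
    (G.subgraphOfAdj hab ⊔ G.subgraphOfAdj hbd).verts = {a, b, d} := by
  rw [Subgraph.verts_sup, subgraphOfAdj_verts, subgraphOfAdj_verts, Set.insert_union,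
    Set.singleton_union, Set.insert_eq_of_mem (Set.mem_insert b {d})]

theorem isTree_coe_sup_subgraphOfAdj {a b d : V} (hab : G.Adj a b) (hbd : G.Adj b d)
    (had : a ≠ d) :
    (G.subgraphOfAdj hab ⊔ G.subgraphOfAdj hbd).coe.IsTree := by
  have hverts := verts_sup_subgraphOfAdj hab hbd
  have : Finite (G.subgraphOfAdj hab ⊔ G.subgraphOfAdj hbd).verts := by
    rw [hverts]; exact Set.toFinite _
  refine isTree_iff_connected_and_card.mpr ⟨?_, ?_⟩
  · exact (Subgraph.connected_sup (Subgraph.subgraphOfAdj_connected hab).preconnected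
      (Subgraph.subgraphOfAdj_connected hbd).preconnected ⟨b, by simp⟩).coe
  · rw [Subgraph.nat_card_edgeSet_coe, Subgraph.edgeSet_sup, edgeSet_subgraphOfAdj,
      edgeSet_subgraphOfAdj, Nat.card_coe_set_eq, hverts, Set.singleton_union,
      Set.ncard_pair, Set.ncard_insert_of_notMem, Set.ncard_pair hbd.ne]
    all_goals simp [hab.ne, had]

def IsRainbowTwoPath {α : Type*} (G : SimpleGraph V) (c : Sym2 V → α) (a b d : V) : Prop :=
  G.Adj a b ∧ G.Adj b d ∧ c s(a, b) ≠ c s(b, d)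

instance [DecidableRel G.Adj] {α : Type*} [DecidableEq α] {c : Sym2 V → α} {a b d : V} :
    Decidable (IsRainbowTwoPath G c a b d) :=
  inferInstanceAs (Decidable (_ ∧ _ ∧ _))

theorem IsRainbowTwoPath.exists_rainbow_tree {α : Type*} {c : Sym2 V → α} {a b d : V}
    (hp : IsRainbowTwoPath G c a b d) (had : a ≠ d) :
    ∃ T : G.Subgraph, T.verts = {a, b, d} ∧ T.coe.IsTree ∧ Set.InjOn c T.edgeSet := by
  obtain ⟨hab, hbd, hc⟩ := hp
  refine ⟨_, verts_sup_subgraphOfAdj hab hbd, isTree_coe_sup_subgraphOfAdj hab hbd had, ?_⟩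
  rw [Subgraph.edgeSet_sup, edgeSet_subgraphOfAdj, edgeSet_subgraphOfAdj, Set.singleton_union,
    Set.injOn_pair]
  exact fun h ↦ absurd h hc

variable [Fintype V] {α : Type*} {c : Sym2 V → α} {k : ℕ}

theorem IsRainbowColoring.not_monochromatic [Finite α] (h : IsRainbowColoring G c k)
    (hk : Nat.card α + 1 = k) (h3 : 3 ≤ k) {S : Finset V} (hS : S.card = k) (a : α) :
    ¬∀ e ∈ G.edgeSet, (∀ v ∈ e, v ∈ S) → c e = a := by
  intro hmono
  obtain ⟨T, hST, hT, hc⟩ := h S hS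
  have hedges : T.edgeSet.ncard ≤ Nat.card α :=
    (Set.ncard_le_ncard_of_injOn c (fun _ _ ↦ Set.mem_univ _) hc).trans_eq (Set.ncard_univ α)
  have hcount := Subgraph.ncard_edgeSet_add_one_of_isTree hT
  have hverts : T.verts = S :=
    (Set.eq_of_subset_of_ncard_le hST (by rw [Set.ncard_coe_finset]; omega)).symm
  have htwo : 1 < T.edgeSet.ncard := by
    rw [hverts, Set.ncard_coe_finset] at hcount
    omega
  obtain ⟨e₁, e₂, he₁, he₂, hne⟩ := (Set.one_lt_ncard_iff).mp htwo
  have hmonoT : ∀ e ∈ T.edgeSet, c e = a := fun e he ↦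
    hmono e (T.edgeSet_subset he) fun v hv ↦ by
      rw [← Finset.mem_coe, ← hverts]
      exact T.mem_verts_of_mem_edge he hv
  exact hne (hc he₁ he₂ ((hmonoT e₁ he₁).trans (hmonoT e₂ he₂).symm))

section Triple

variable [DecidableEq V] (h : IsRainbowColoring G c 3) (hα : Nat.card α = 2)
include h hα

theorem IsRainbowColoring.ne_of_not_adj {x y z : V} (hxy : x ≠ y) (hnxy : ¬G.Adj x y)
    (hxz : G.Adj x z) (hyz : G.Adj y z) : c s(x, z) ≠ c s(y, z) := by
  have := Nat.finite_of_card_ne_zero (hα ▸ two_ne_zero)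
  refine fun hxyz ↦ h.not_monochromatic (by omega) le_rfl
    (Finset.card_eq_three.mpr ⟨x, y, z, hxy, hxz.ne, hyz.ne, rfl⟩) (c s(x, z))
    fun e he hv ↦ ?_
  rcases Sym2.eq_or_eq_or_eq_of_forall_mem (G.not_isDiag_of_mem_edgeSet he) hv with rfl | rfl | rfl
  exacts [absurd he hnxy, rfl, hxyz.symm]

theorem IsRainbowColoring.ne_of_triangle {x y z : V} (hxy : G.Adj x y) (hxz : G.Adj x z)
    (hyz : G.Adj y z) (heq : c s(x, y) = c s(x, z)) : c s(y, z) ≠ c s(x, y) := by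
  have := Nat.finite_of_card_ne_zero (hα ▸ two_ne_zero)
  refine fun hxyz ↦ h.not_monochromatic (by omega) le_rfl
    (Finset.card_eq_three.mpr ⟨x, y, z, hxy.ne, hxz.ne, hyz.ne, rfl⟩) (c s(x, y))
    fun e he hv ↦ ?_
  rcases Sym2.eq_or_eq_or_eq_of_forall_mem (G.not_isDiag_of_mem_edgeSet he) hv with rfl | rfl | rfl
  exacts [rfl, heq.symm, hxyz]

end Triple

theorem isRainbowColoring_three_of_forall_isRainbowTwoPath [DecidableEq V]
    (h : ∀ x y z : V, ({x, y, z} : Finset V).card = 3 →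
      IsRainbowTwoPath G c y x z ∨ IsRainbowTwoPath G c x y z ∨ IsRainbowTwoPath G c x z y) :
    IsRainbowColoring G c 3 := by
  intro S hS
  obtain ⟨x, y, z, hxy, hxz, hyz, rfl⟩ := Finset.card_eq_three.mp hS
  obtain ⟨a, b, d, hp, had, habd⟩ : ∃ a b d, IsRainbowTwoPath G c a b d ∧ a ≠ d ∧
      ({a, b, d} : Set V) = {x, y, z} := by
    rcases h x y z hS with hp | hp | hp
    exacts [⟨y, x, z, hp, hyz, Set.insert_comm _ _ _⟩, ⟨x, y, z, hp, hxz, rfl⟩,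
      ⟨x, z, y, hp, hxy, by rw [Set.pair_comm]⟩]
  obtain ⟨T, hT, htree, hc⟩ := hp.exists_rainbow_tree had
  exact ⟨T, by simp [hT, habd], htree, hc⟩

theorem IsRainbowColoring.comp_injective {β : Type*} {f : α → β} (hf : Function.Injective f)
    (h : IsRainbowColoring G c k) : IsRainbowColoring G (f ∘ c) k :=
  fun S hS ↦ (h S hS).imp fun _ ⟨hST, hT, hc⟩ ↦ ⟨hST, hT, hf.comp_injOn hc⟩

theorem rxk_le {q : ℕ} {c : Sym2 V → Fin q} (h : IsRainbowColoring G c k) : rxk G k ≤ q :=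
  Nat.sInf_le (show q ∈ {q | ∃ c : Sym2 V → Fin q, IsRainbowColoring G c k} from ⟨c, h⟩)

theorem lt_rxk {p q : ℕ} {c : Sym2 V → Fin p} (hc : IsRainbowColoring G c k)
    (h : ∀ c : Sym2 V → Fin q, ¬IsRainbowColoring G c k) : q < rxk G k := by
  unfold rxk
  refine Nat.lt_of_succ_le (le_csInf ⟨p, c, hc⟩ ?_)
  rintro r ⟨c', hc'⟩
  by_contra! hr
  exact h (Fin.castLE (Nat.lt_succ_iff.mp hr) ∘ c') (hc'.comp_injective (Fin.castLE_injective _))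

end SimpleGraph

theorem K5MinusE_adj {x y : Fin 5} : K5MinusE.Adj x y ↔ x ≠ y ∧ ¬(x ≤ 1 ∧ y ≤ 1) := by
  simp only [K5MinusE, deleteEdges_adj, completeGraph_eq_top, top_adj, Set.mem_singleton_iff,
    Sym2.eq_iff]
  omega

instance : DecidableRel K5MinusE.Adj := fun _ _ ↦ decidable_of_iff _ K5MinusE_adj.symm

def sumModThreeColoring : Sym2 (Fin 5) → Fin 3 :=
  Sym2.lift ⟨fun i j ↦ Fin.ofNat 3 (i + j), fun i j ↦
    congrArg (Fin.ofNat 3) (Nat.add_comm i j)⟩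

theorem isRainbowColoring_K5MinusE_sumModThree :
    IsRainbowColoring K5MinusE sumModThreeColoring 3 :=
  isRainbowColoring_three_of_forall_isRainbowTwoPath (by decide)

theorem not_isRainbowColoring_K5MinusE_fin_two (c : Sym2 (Fin 5) → Fin 2) :
    ¬IsRainbowColoring K5MinusE c 3 := by
  intro h
  have hα : Nat.card (Fin 2) = 2 := Nat.card_fin 2
  have hadj : ∀ u v : Fin 5, u ≠ v → 2 ≤ v → K5MinusE.Adj u v := fun u v huv hv ↦
    K5MinusE_adj.mpr ⟨huv, by omega⟩
  have hdistinct : ∀ x y : Fin 5, 2 ≤ x → 2 ≤ y → x ≠ y → c s(0, x) ≠ c s(0, y) := by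
    intro x y hx hy hxy h0
    have h01x := h.ne_of_not_adj hα (by decide) (by decide) (hadj 0 x (by omega) hx)
      (hadj 1 x (by omega) hx)
    have h01y := h.ne_of_not_adj hα (by decide) (by decide) (hadj 0 y (by omega) hy)
      (hadj 1 y (by omega) hy)
    have h1 : c s(1, x) = c s(1, y) := by omega
    have h0xy := h.ne_of_triangle hα (hadj 0 x (by omega) hx) (hadj 0 y (by omega) hy)
      (hadj x y hxy hy) h0
    have h1xy := h.ne_of_triangle hα (hadj 1 x (by omega) hx) (hadj 1 y (by omega) hy)
      (hadj x y hxy hy) h1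
    omega
  have h23 := hdistinct 2 3 (by decide) (by decide) (by decide)
  have h24 := hdistinct 2 4 (by decide) (by decide) (by decide)
  have h34 := hdistinct 3 4 (by decide) (by decide) (by decide)
  omega

theorem stmt_15 : rxk K5MinusE 3 = 3 :=
  le_antisymm (rxk_le isRainbowColoring_K5MinusE_sumModThree)
    (lt_rxk isRainbowColoring_K5MinusE_sumModThree not_isRainbowColoring_K5MinusE_fin_two)
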